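/- Let U ⊆ ℂ be open with T ≠ 0, T³ ≠ 1 and T³ ≠ −8 for all T ∈ U, let V ⊆ ℂ be open with T³ ∈ V and T³·(T³−1)·(T³+8) ≠ 0 for all T ∈ U, let ψ solve ψ'' = Q₃·ψ on V, and let g : ℂ → ℂ be twice differentiable and nonvanishing on U with g(T)² = 3T² for all T ∈ U. Then Φ(T) := ψ(T³)/g(T) solves Φ''(T) = −(1/4)·(T⁶−20T³−8)²/(T²(T³+8)²(T³−1)²)·Φ(T) on U. -/

import Mathlib

/-!
For a local biholomorphism `φ` and a branch `g` of `√φ'`, Liouville's transformation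
`Φ = (ψ ∘ φ) / g` turns `ψ'' = Q ψ` into `Φ'' = (φ'² · Q ∘ φ − S(φ)/2) Φ`, where `S` is the
Schwarzian derivative; the only input is `g' = φ'' / (2g)`, read off from `g² = φ'`.
For `φ = T³` one has `φ' = 3T²` and `S(φ) = −4/T²`, and `9T⁴ Q₃(T³) + 2/T²` simplifies to the
stated coefficient.
-/

open Complex

/-- `f` solves the equation `ψ'' = Q·ψ` on the open set `U`. -/
def SolvesOn (Q f : ℂ → ℂ) (U : Set ℂ) : Prop :=
  (∀ x ∈ U, DifferentiableAt ℂ f x) ∧ (∀ x ∈ U, DifferentiableAt ℂ (deriv f) x) ∧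
    ∀ x ∈ U, deriv (deriv f) x = Q x * f x

/-- The coefficient of the normal form (3') of the third Chudnovsky equation. -/
noncomputable def Q₃ (x : ℂ) : ℂ :=
  -(1 / 4) * (x ^ 4 + 8 * x ^ 3 + 72 * x ^ 2 - 64 * x + 64)
    / (x ^ 2 * (x - 1) ^ 2 * (x + 8) ^ 2)

open Filter Topology Set

noncomputable def schwarzian (f : ℂ → ℂ) (z : ℂ) : ℂ :=
  deriv^[3] f z / deriv f z - 3 / 2 * (deriv^[2] f z / deriv f z) ^ 2

theorem schwarzian_zpow (m : ℤ) {z : ℂ} (hm : m ≠ 0) (hz : z ≠ 0) :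
    schwarzian (fun x => x ^ m) z = (1 - m ^ 2) / (2 * z ^ 2) := by
  have h1 : z ^ (m - 2 : ℤ) = z ^ (m - 1) / z := by
    rw [show m - 2 = m - 1 - 1 by ring, zpow_sub_one₀ hz]; ring
  have h2 : z ^ (m - 3 : ℤ) = z ^ (m - 1) / z ^ 2 := by
    rw [show m - 3 = m - 1 - 2 by ring, zpow_sub₀ hz]; norm_cast
  have hzm : z ^ (m - 1) ≠ 0 := zpow_ne_zero _ hz
  have hm' : (m : ℂ) ≠ 0 := by exact_mod_cast hm
  simp only [schwarzian, iter_deriv_zpow, deriv_zpow, Finset.prod_range_succ,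
    Finset.prod_range_zero]
  push_cast
  rw [h1, h2]
  field_simp
  ring

theorem schwarzian_pow (n : ℕ) {z : ℂ} (hn : n ≠ 0) (hz : z ≠ 0) :
    schwarzian (fun x => x ^ n) z = (1 - n ^ 2) / (2 * z ^ 2) := by
  simpa using schwarzian_zpow n (by exact_mod_cast hn) hz

theorem deriv_eq_div_of_sq_eq {f g : ℂ → ℂ} {U : Set ℂ} {z : ℂ} (hU : U ∈ 𝓝 z)
    (hg : DifferentiableAt ℂ g z) (hgz : g z ≠ 0)
    (hsq : ∀ w ∈ U, g w ^ 2 = f w) : deriv g z = deriv f z / (2 * g z) := by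
  have h := (eventuallyEq_of_mem hU hsq).deriv_eq
  rw [deriv_fun_pow hg] at h
  field_simp
  linear_combination h

theorem SolvesOn.congr_left {Q Q' f : ℂ → ℂ} {U : Set ℂ} (h : SolvesOn Q f U)
    (hQ : ∀ x ∈ U, Q x = Q' x) : SolvesOn Q' f U :=
  ⟨h.1, h.2.1, fun x hx => hQ x hx ▸ h.2.2 x hx⟩

theorem SolvesOn.comp_div_sqrt_deriv {Q ψ φ g : ℂ → ℂ} {U V : Set ℂ} (hU : IsOpen U)
    (hψ : SolvesOn Q ψ V) (hφ : DifferentiableOn ℂ φ U) (hφV : MapsTo φ U V)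
    (hφ' : ∀ z ∈ U, deriv φ z ≠ 0) (hg : ∀ z ∈ U, DifferentiableAt ℂ g z)
    (hgsq : ∀ z ∈ U, g z ^ 2 = deriv φ z) :
    SolvesOn (fun z => deriv φ z ^ 2 * Q (φ z) - schwarzian φ z / 2)
      (fun z => ψ (φ z) / g z) U := by
  obtain ⟨hψ₀, hψ₁, hψ₂⟩ := hψ
  have hφa := hφ.analyticOnNhd hU
  have hφ₀ : ∀ z ∈ U, DifferentiableAt ℂ φ z := fun z hz => (hφa z hz).differentiableAt
  have hφ₂ : ∀ z ∈ U, DifferentiableAt ℂ (deriv (deriv φ)) z := fun z hz =>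
    (hφa.deriv.deriv z hz).differentiableAt
  have hgne : ∀ z ∈ U, g z ≠ 0 := fun z hz h => hφ' z hz (by rw [← hgsq z hz, h]; ring)
  have hg' : ∀ z ∈ U, deriv g z = deriv (deriv φ) z / (2 * g z) := fun z hz =>
    deriv_eq_div_of_sq_eq (hU.mem_nhds hz) (hg z hz) (hgne z hz) hgsq
  have hψφ : ∀ z ∈ U, HasDerivAt (fun w => ψ (φ w)) (deriv ψ (φ z) * deriv φ z) z :=
    fun z hz => (hψ₀ _ (hφV hz)).hasDerivAt.comp z (hφ₀ z hz).hasDerivAt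
  have hΦ' : ∀ z ∈ U, deriv (fun w => ψ (φ w) / g w) z =
      deriv ψ (φ z) * g z - ψ (φ z) * deriv (deriv φ) z / (2 * g z ^ 3) := by
    intro z hz
    -- the chain-rule factor `φ'` cancels against `g² = φ'`
    rw [((hψφ z hz).fun_div (hg z hz).hasDerivAt (hgne z hz)).deriv, hg' z hz, ← hgsq z hz]
    field_simp
  have hF : ∀ z ∈ U, HasDerivAt
      (fun w => deriv ψ (φ w) * g w - ψ (φ w) * deriv (deriv φ) w / (2 * g w ^ 3)) _ z :=
    fun z hz =>
      ((((hψ₁ _ (hφV hz)).hasDerivAt.comp z (hφ₀ z hz).hasDerivAt).mul (hg z hz).hasDerivAt).sub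
        (((hψφ z hz).fun_mul (hφ₂ z hz).hasDerivAt).fun_div
          (((hg z hz).hasDerivAt.pow 3).const_mul 2) (by simp [hgne z hz])))
  have hΦ'eq : ∀ z ∈ U, deriv (fun w => ψ (φ w) / g w) =ᶠ[𝓝 z]
      fun w => deriv ψ (φ w) * g w - ψ (φ w) * deriv (deriv φ) w / (2 * g w ^ 3) :=
    fun z hz => eventually_of_mem (hU.mem_nhds hz) hΦ'
  refine ⟨fun z hz => ((hψ₀ _ (hφV hz)).comp z (hφ₀ z hz)).div (hg z hz) (hgne z hz),
    fun z hz => (hF z hz).differentiableAt.congr_of_eventuallyEq (hΦ'eq z hz), fun z hz => ?_⟩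
  rw [(hΦ'eq z hz).deriv_eq, (hF z hz).deriv, hψ₂ _ (hφV hz), hg' z hz]
  simp only [schwarzian, Function.iterate_succ_apply', Function.iterate_zero_apply,
    Function.comp_apply]
  rw [← hgsq z hz]
  have hgz := hgne z hz
  field_simp
  ring

theorem Q₃_pullback_cube {T : ℂ} (h0 : T ≠ 0) (h1 : T ^ 3 ≠ 1) (h8 : T ^ 3 ≠ -8) :
    (3 * T ^ 2) ^ 2 * Q₃ (T ^ 3) + 2 / T ^ 2 =
      -(1 / 4) * (T ^ 6 - 20 * T ^ 3 - 8) ^ 2 / (T ^ 2 * (T ^ 3 + 8) ^ 2 * (T ^ 3 - 1) ^ 2) := by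
  have h1' : T ^ 3 - 1 ≠ 0 := sub_ne_zero.mpr h1
  have h8' : T ^ 3 + 8 ≠ 0 := fun h => h8 (eq_neg_of_add_eq_zero_left h)
  rw [Q₃]
  field_simp
  ring

theorem chudnovsky_three_cube_substitution_general
    (U V : Set ℂ) (hU : IsOpen U)
    (hT0 : ∀ T ∈ U, T ≠ 0)
    (hT1 : ∀ T ∈ U, T ^ 3 ≠ 1)
    (hT8 : ∀ T ∈ U, T ^ 3 ≠ -8)
    (hTV : ∀ T ∈ U, T ^ 3 ∈ V)
    (ψ g : ℂ → ℂ)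
    (hψ : SolvesOn Q₃ ψ V)
    (hg1 : ∀ T ∈ U, DifferentiableAt ℂ g T)
    (hgsq : ∀ T ∈ U, g T ^ 2 = 3 * T ^ 2) :
    SolvesOn (fun T => -(1 / 4) * (T ^ 6 - 20 * T ^ 3 - 8) ^ 2
        / (T ^ 2 * (T ^ 3 + 8) ^ 2 * (T ^ 3 - 1) ^ 2))
      (fun T => ψ (T ^ 3) / g T) U := by
  have hderiv : ∀ T : ℂ, deriv (fun x => x ^ 3) T = 3 * T ^ 2 := fun T => by simp
  refine (hψ.comp_div_sqrt_deriv hU (differentiable_pow 3).differentiableOn hTV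
    (fun T hT => by simp [hderiv, hT0 T hT]) hg1 (fun T hT => by rw [hgsq T hT, hderiv])).congr_left
    fun T hT => ?_
  rw [hderiv, schwarzian_pow 3 three_ne_zero (hT0 T hT), ← Q₃_pullback_cube (hT0 T hT) (hT1 T hT)
    (hT8 T hT)]
  ring

theorem chudnovsky_three_cube_substitution
    (U V : Set ℂ) (hU : IsOpen U) (hV : IsOpen V)
    (hT0 : ∀ T ∈ U, T ≠ 0)
    (hT1 : ∀ T ∈ U, T ^ 3 ≠ 1)
    (hT8 : ∀ T ∈ U, T ^ 3 ≠ -8)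
    (hTV : ∀ T ∈ U, T ^ 3 ∈ V)
    (hVne : ∀ T ∈ U, T ^ 3 * (T ^ 3 - 1) * (T ^ 3 + 8) ≠ 0)
    (ψ g : ℂ → ℂ)
    (hψ : SolvesOn Q₃ ψ V)
    (hg1 : ∀ T ∈ U, DifferentiableAt ℂ g T)
    (hg2 : ∀ T ∈ U, DifferentiableAt ℂ (deriv g) T)
    (hgne : ∀ T ∈ U, g T ≠ 0)
    (hgsq : ∀ T ∈ U, g T ^ 2 = 3 * T ^ 2) :
    SolvesOn (fun T => -(1 / 4) * (T ^ 6 - 20 * T ^ 3 - 8) ^ 2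
        / (T ^ 2 * (T ^ 3 + 8) ^ 2 * (T ^ 3 - 1) ^ 2))
      (fun T => ψ (T ^ 3) / g T) U :=
  chudnovsky_three_cube_substitution_general U V hU hT0 hT1 hT8 hTV ψ g hψ hg1 hgsq
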